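/- Let C ∈ ℝ_max^{n×n}. Then the infimum over x ∈ ℝ^n of max_{(i,j) : c_{ij} ∈ ℝ} (c_{ij} + x_j − x_i) equals ρ(C), where both sides are elements of ℝ ∪ {−∞} and the maximum over an empty set is −∞. -/

import Mathlib

/-! For a real potential `x`, the weight of a closed walk does not change when each arc value
`C i j` is replaced by `C i j + x j - x i`, so every potential bounds `ρ(C)` from above.
Conversely, if `M > ρ(C)` then `C - M` has no positive closed walk. Cutting out cycles bounds the
weights of the walks starting at `i`, so their supremum `X i` is finite, and it satisfies
`C i j - M + X j ≤ X i`: every arc value of the potential `X` is at most `M`. -/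

/-- Max-plus identity matrix: `0` on the diagonal, `−∞` off it. -/
noncomputable def mpId (n : ℕ) : Fin n → Fin n → EReal := fun i j => if i = j then 0 else ⊥

/-- Max-plus matrix product. -/
noncomputable def mpMul {n : ℕ} (A B : Fin n → Fin n → EReal) : Fin n → Fin n → EReal :=
  fun i j => ⨆ k, A i k + B k j

/-- Max-plus matrix powers, `A^0 = I`. -/
noncomputable def mpPow {n : ℕ} (A : Fin n → Fin n → EReal) : ℕ → Fin n → Fin n → EReal
  | 0 => mpId n
  | k + 1 => mpMul (mpPow A k) A

/-- Kleene star truncation `A* = I ⊕ A ⊕ ⋯ ⊕ A^{n−1}` (entrywise maximum). -/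
noncomputable def mpStar {n : ℕ} (A : Fin n → Fin n → EReal) : Fin n → Fin n → EReal :=
  fun i j => ⨆ k : Fin n, mpPow A (k : ℕ) i j

/-- Maximum cycle mean `ρ(A)`: the supremum, over all closed walks
`f 0, f 1, …, f k = f 0` (`k ≥ 1`), of the mean weight of the walk.  A walk using
a `−∞` arc has mean `−∞`, so this equals the maximum mean over elementary cycles
of the digraph of finite entries, and it is `−∞` when that digraph is acyclic. -/
noncomputable def rho {n : ℕ} (A : Fin n → Fin n → EReal) : EReal :=
  ⨆ (k : ℕ) (_ : 0 < k) (f : ℕ → Fin n) (_ : f k = f 0),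
    (((k : ℝ)⁻¹ : ℝ) : EReal) * ∑ i ∈ Finset.range k, A (f i) (f (i + 1))

open Finset

lemma EReal.coe_finset_sum {ι : Type*} (s : Finset ι) (g : ι → ℝ) :
    ((∑ i ∈ s, g i : ℝ) : EReal) = ∑ i ∈ s, (g i : EReal) :=
  map_sum (⟨⟨(↑), EReal.coe_zero⟩, EReal.coe_add⟩ : ℝ →+ EReal) g s

lemma EReal.coe_inv_mul_le_iff {c : ℝ} (hc : 0 < c) {w y : EReal} :
    ((c⁻¹ : ℝ) : EReal) * w ≤ y ↔ w ≤ c * y := by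
  rw [EReal.coe_inv, mul_comm, ← div_eq_mul_inv,
    EReal.div_le_iff_le_mul (EReal.coe_pos.mpr hc) (EReal.coe_ne_top c)]

lemma EReal.le_add_coe_sub_of_add_sub_le {a S : EReal} {u v : ℝ} (h : a + u - v ≤ S) :
    a ≤ S + ((v - u : ℝ) : EReal) := by
  induction a using EReal.rec with
  | bot => exact bot_le
  | top =>
    have hS : S = ⊤ := top_le_iff.mp (by simpa using h)
    rw [hS, EReal.top_add_coe]
  | coe a =>
    induction S using EReal.rec with
    | bot => exact absurd (le_bot_iff.mp h) (by norm_cast)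
    | top => rw [EReal.top_add_coe]; exact le_top
    | coe S => norm_cast at h ⊢; linarith

lemma EReal.add_sub_le_of_sub_add_le {a : EReal} {M u v : ℝ} (ha : a ≠ ⊤)
    (h : a - M + u ≤ v) : a + u - v ≤ M := by
  induction a using EReal.rec with
  | bot => simp
  | top => exact absurd rfl ha
  | coe a => norm_cast at h ⊢; linarith

section Walks

variable {α M : Type*}

def walkWeight [AddCommMonoid M] (B : α → α → M) (f : ℕ → α) (k : ℕ) : M :=
  ∑ t ∈ range k, B (f t) (f (t + 1))

def walkCons (i : α) (f : ℕ → α) : ℕ → α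
  | 0 => i
  | t + 1 => f t

section AddCommMonoid

variable [AddCommMonoid M] (B : α → α → M)

lemma walkWeight_add (f : ℕ → α) (a b : ℕ) :
    walkWeight B f (a + b) = walkWeight B f a + walkWeight B (fun t => f (a + t)) b := by
  simp only [walkWeight, sum_range_add, add_assoc]

lemma walkWeight_congr {f g : ℕ → α} {k : ℕ} (h : ∀ t ≤ k, f t = g t) :
    walkWeight B f k = walkWeight B g k :=
  sum_congr rfl fun t ht => by
    rw [mem_range] at ht
    rw [h t ht.le, h (t + 1) ht]

lemma walkWeight_walkCons (i : α) (f : ℕ → α) (k : ℕ) :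
    walkWeight B (walkCons i f) (k + 1) = B i (f 0) + walkWeight B f k := by
  rw [walkWeight, sum_range_succ', add_comm]
  rfl

/-- The second walk on the right is `f` with the closed subwalk `f a → ⋯ → f (a + d)` cut out. -/
lemma walkWeight_eq_add_of_cycle {f : ℕ → α} {a d : ℕ} (hcyc : f (a + d) = f a) (r : ℕ) :
    walkWeight B f (a + d + r) = walkWeight B (fun t => f (a + t)) d +
      walkWeight B (fun t => if t ≤ a then f t else f (t + d)) (a + r) := by
  have head : walkWeight B (fun t => if t ≤ a then f t else f (t + d)) a = walkWeight B f a :=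
    walkWeight_congr B fun t ht => if_pos ht
  have tail : walkWeight B (fun t => if a + t ≤ a then f (a + t) else f (a + t + d)) r =
      walkWeight B (fun t => f (a + d + t)) r := by
    refine walkWeight_congr B fun t _ => ?_
    rcases t.eq_zero_or_pos with rfl | ht
    · simp [hcyc]
    · simp only [show ¬ a + t ≤ a by omega, if_false]
      congr 1
      omega
  rw [walkWeight_add, walkWeight_add, walkWeight_add, head, tail, add_left_comm, add_assoc]

end AddCommMonoid

variable [AddCommMonoid M] [PartialOrder M] [IsOrderedAddMonoid M] {B : α → α → M}

/-- A walk of length `≥ card α` revisits a vertex; cutting out that cycle does not decrease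
the weight, and we induct on the length. -/
lemma exists_lt_card_walkWeight_le [Fintype α]
    (hB : ∀ k f, 0 < k → f k = f 0 → walkWeight B f k ≤ 0) (m : ℕ) (f : ℕ → α) :
    ∃ m' < Fintype.card α, ∃ g : ℕ → α, g 0 = f 0 ∧ walkWeight B f m ≤ walkWeight B g m' := by
  induction m using Nat.strong_induction_on generalizing f with
  | _ m ih =>
  by_cases hm : m < Fintype.card α
  · exact ⟨m, hm, f, rfl, le_rfl⟩
  obtain ⟨a, b, hab, hfab⟩ : ∃ a b : Fin (Fintype.card α + 1), a < b ∧ f a = f b := by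
    obtain ⟨a, b, hne, heq⟩ :=
      Fintype.exists_ne_map_eq_of_card_lt (fun t : Fin (Fintype.card α + 1) => f t) (by simp)
    rcases hne.lt_or_gt with h | h
    exacts [⟨a, b, h, heq⟩, ⟨b, a, h, heq.symm⟩]
  have hab' : (a : ℕ) < b := hab
  have hbm : (b : ℕ) ≤ m := by omega
  obtain ⟨d, hd⟩ : ∃ d, (b : ℕ) = a + d := ⟨b - a, by omega⟩
  obtain ⟨r, hr⟩ : ∃ r, m = a + d + r := ⟨m - b, by omega⟩
  have hcyc : f (a + d) = f a := by rw [← hd, hfab]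
  obtain ⟨m', hm', g, hg0, hg⟩ :=
    ih (a + r) (by omega) fun t => if t ≤ a then f t else f (t + d)
  refine ⟨m', hm', g, by simpa using hg0, ?_⟩
  calc walkWeight B f m
      = walkWeight B (fun t => f (a + t)) d +
          walkWeight B (fun t => if t ≤ a then f t else f (t + d)) (a + r) := by
        rw [hr, walkWeight_eq_add_of_cycle B hcyc]
    _ ≤ 0 + walkWeight B (fun t => if t ≤ a then f t else f (t + d)) (a + r) :=
        add_le_add (hB d (fun t => f (a + t)) (by omega) (by simpa using hcyc)) le_rfl
    _ ≤ walkWeight B g m' := by rw [zero_add]; exact hg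

end Walks

/-- The potential is the supremum of the weights of the walks starting at `i`. -/
lemma exists_potential_of_walkWeight_nonpos {α : Type*} [Fintype α] {B : α → α → EReal}
    (hB : ∀ i j, B i j ≠ ⊤) (hcyc : ∀ k f, 0 < k → f k = f 0 → walkWeight B f k ≤ 0) :
    ∃ x : α → ℝ, ∀ i j, B i j + x j ≤ x i := by
  set X : α → EReal := fun i => ⨆ (k : ℕ) (f : ℕ → α) (_ : f 0 = i), walkWeight B f k
  have le_X : ∀ k f, walkWeight B f k ≤ X (f 0) := fun k f =>
    le_iSup_of_le k (le_iSup_of_le f (le_iSup_of_le rfl le_rfl))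
  obtain ⟨r, hr⟩ := Finite.exists_le fun p : α × α => (B p.1 p.2).toReal
  set R : EReal := ((max r 0 : ℝ) : EReal)
  have hR : ∀ i j, B i j ≤ R := fun i j =>
    (EReal.le_coe_toReal (hB i j)).trans (EReal.coe_le_coe_iff.mpr ((hr (i, j)).trans
      (le_max_left _ _)))
  have X_le : ∀ i, X i ≤ Fintype.card α • R := fun i => by
    refine iSup_le fun k => iSup_le fun f => iSup_le fun _ => ?_
    obtain ⟨m, hm, g, -, hfg⟩ := exists_lt_card_walkWeight_le hcyc k f
    calc walkWeight B f k ≤ walkWeight B g m := hfg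
      _ ≤ m • R :=
          (sum_le_card_nsmul (range m) _ R fun t _ => hR _ _).trans_eq (by rw [card_range])
      _ ≤ Fintype.card α • R := nsmul_le_nsmul_left (EReal.coe_nonneg.mpr (le_max_right _ _))
          hm.le
  have X_ne_top : ∀ i, X i ≠ ⊤ := fun i =>
    ne_top_of_le_ne_top (by rw [← EReal.coe_nsmul]; exact EReal.coe_ne_top _) (X_le i)
  have X_ne_bot : ∀ i, X i ≠ ⊥ := fun i =>
    ne_bot_of_le_ne_bot EReal.zero_ne_bot (le_X 0 fun _ => i)
  refine ⟨fun i => (X i).toReal, fun i j => ?_⟩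
  simp only [EReal.coe_toReal (X_ne_top _) (X_ne_bot _)]
  refine EReal.add_le_of_forall_lt fun a ha b hb => ?_
  obtain ⟨k, f, rfl, hbf⟩ : ∃ k f, f 0 = j ∧ b < walkWeight B f k := by
    simpa only [X, lt_iSup_iff, exists_prop] using hb
  calc a + b ≤ B i (f 0) + walkWeight B f k := add_le_add ha.le hbf.le
    _ = walkWeight B (walkCons i f) (k + 1) := (walkWeight_walkCons B i f k).symm
    _ ≤ X i := le_X _ _

section CycleMean

variable {n : ℕ} {C : Fin n → Fin n → EReal}

lemma rho_le_iff {y : EReal} :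
    rho C ≤ y ↔ ∀ k, 0 < k → ∀ f : ℕ → Fin n, f k = f 0 → walkWeight C f k ≤ k • y := by
  simp only [rho, iSup_le_iff, EReal.nsmul_eq_mul]
  refine forall_congr' fun k => forall_congr' fun hk => forall_congr' fun f => forall_congr'
    fun _ => ?_
  exact EReal.coe_inv_mul_le_iff (by exact_mod_cast hk)

lemma rho_le_iSup_add_sub (x : Fin n → ℝ) :
    rho C ≤ ⨆ (i) (j) (_ : C i j ≠ ⊥), (C i j + (x j : EReal) - (x i : EReal)) := by
  set S := ⨆ (i) (j) (_ : C i j ≠ ⊥), (C i j + (x j : EReal) - (x i : EReal))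
  have hS : ∀ i j, C i j ≤ S + ((x i - x j : ℝ) : EReal) := fun i j => by
    rcases eq_or_ne (C i j) ⊥ with h | h
    · simp [h]
    · exact EReal.le_add_coe_sub_of_add_sub_le (le_iSup₂_of_le i j (le_iSup_of_le h le_rfl))
  refine rho_le_iff.mpr fun k _ f hf => ?_
  calc walkWeight C f k ≤ ∑ t ∈ range k, (S + ((x (f t) - x (f (t + 1)) : ℝ) : EReal)) :=
        sum_le_sum fun t _ => hS _ _
    _ = k • S := by
        rw [sum_add_distrib, sum_const, card_range, ← EReal.coe_finset_sum,
          sum_range_sub' (fun t => x (f t)), hf, sub_self, EReal.coe_zero, add_zero]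

lemma exists_potential_of_rho_le (hC : ∀ i j, C i j ≠ ⊤) {M : ℝ} (hM : rho C ≤ M) :
    ∃ x : Fin n → ℝ, ∀ i j, C i j + (x j : EReal) - (x i : EReal) ≤ M := by
  have hcyc : ∀ k f, 0 < k → f k = f 0 → walkWeight (fun i j => C i j - M) f k ≤ 0 := by
    intro k f hk hf
    calc walkWeight (fun i j => C i j - M) f k = walkWeight C f k + k • ((-M : ℝ) : EReal) := by
          change ∑ t ∈ range k, (C (f t) (f (t + 1)) + ((-M : ℝ) : EReal)) = _
          rw [sum_add_distrib, sum_const, card_range]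
          rfl
      _ ≤ k • (M : EReal) + k • ((-M : ℝ) : EReal) :=
          add_le_add (rho_le_iff.mp hM k hk f hf) le_rfl
      _ = 0 := by rw [← nsmul_add, ← EReal.coe_add, add_neg_cancel, EReal.coe_zero, nsmul_zero]
  obtain ⟨x, hx⟩ := exists_potential_of_walkWeight_nonpos
    (fun i j => (EReal.add_lt_top (hC i j) (EReal.coe_ne_top (-M))).ne) hcyc
  exact ⟨x, fun i j => EReal.add_sub_le_of_sub_add_le (hC i j) (hx i j)⟩

end CycleMean

/-- `inf_{x ∈ ℝ^n} max_{(i,j) : C i j ∈ ℝ} (C i j + x j − x i) = ρ(C)`,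
where the maximum over an empty set is `−∞`. -/
theorem stmt6 (n : ℕ) (C : Fin n → Fin n → EReal) (hC : ∀ i j, C i j ≠ ⊤) :
    (⨅ x : Fin n → ℝ,
        ⨆ (i) (j) (_ : C i j ≠ ⊥), (C i j + (x j : EReal) - (x i : EReal))) = rho C := by
  refine le_antisymm (EReal.le_of_forall_lt_iff_le.mp fun M hM => ?_)
    (le_iInf (rho_le_iSup_add_sub (C := C)))
  obtain ⟨x, hx⟩ := exists_potential_of_rho_le hC hM.le
  exact iInf_le_of_le x (iSup₂_le fun i j => iSup_le fun _ => hx i j)
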